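/- Let k ≥ 1 and n = 2k + 2. Identify W = span(e₂,…,e_{n-1}) ⊆ ℝⁿ with ℝ^{2k}, and let θ : W → W be a linear map with no real eigenvalues (for every r ∈ ℝ and w ∈ W, θ(w) = r·w implies w = 0). For (w, s) ∈ W × ℝ define the affine map g_{w,s} : ℝⁿ → ℝⁿ by g_{w,s}(x) = U_w(x) + θ(w) + s·e₁, where U_w(x) = x − xₙ w + (B(x,w) − xₙ B(w,w)/2) e₁. Then for every r ∈ ℝ and all x, y ∈ ℝⁿ with xₙ = yₙ = r, there exists a unique pair (w, s) ∈ W × ℝ with g_{w,s}(x) = y. In other words, the group H = {g_{w,s} : (w,s) ∈ W × ℝ} acts simply transitively on each degenerate affine hyperplane {x ∈ ℝⁿ : xₙ = r}. -/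

import Mathlib

/- In this file the paper's `k ≥ 1` is encoded as `k + 1` for `k : ℕ`, so the paper's
dimension `n = 2k + 2 ≥ 4` becomes `2 * k + 1 + 3`, and `ℝⁿ` is `Fin (2*k+1+3) → ℝ`.
The subspace `W = span(e₂,…,e_{n-1}) ≅ ℝ^{2k}` is the set of vectors with vanishing
first and last coordinates (indices `0` and `2*k+3`). -/

/-- The Lorentzian bilinear form `B(x,y) = x₁yₙ + xₙy₁ + Σ_{i=2}^{n-1} xᵢyᵢ`. -/
noncomputable def bform (n : ℕ) (x y : Fin (n + 3) → ℝ) : ℝ :=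
  x ⟨0, by omega⟩ * y ⟨n + 2, by omega⟩ + x ⟨n + 2, by omega⟩ * y ⟨0, by omega⟩ +
    ∑ i : Fin (n + 3), if 1 ≤ i.val ∧ i.val ≤ n + 1 then x i * y i else 0

/-- The first standard basis vector `e₁`. -/
noncomputable def eOne (n : ℕ) : Fin (n + 3) → ℝ :=
  Pi.single (⟨0, by omega⟩ : Fin (n + 3)) (1 : ℝ)

/-- The unipotent linear map `U_w(x) = x - xₙ w + (B(x,w) - xₙ B(w,w)/2) e₁`. -/
noncomputable def uMap (n : ℕ) (w x : Fin (n + 3) → ℝ) : Fin (n + 3) → ℝ :=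
  x - x ⟨n + 2, by omega⟩ • w +
    (bform n x w - x ⟨n + 2, by omega⟩ * bform n w w / 2) • eOne n

/-- For `θ : W → W` linear with no real eigenvalues, the group of affine
maps `g_{w,s}(x) = U_w(x) + θ(w) + s e₁`, `(w,s) ∈ W × ℝ`, acts simply transitively on
each degenerate hyperplane `{x : xₙ = r}`. -/
theorem stmt_17 (k : ℕ)
    (θ : (Fin (2 * k + 1 + 3) → ℝ) →ₗ[ℝ] (Fin (2 * k + 1 + 3) → ℝ))
    (hθW : ∀ w : Fin (2 * k + 1 + 3) → ℝ,
        w ⟨0, by omega⟩ = 0 → w ⟨2 * k + 3, by omega⟩ = 0 →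
        θ w ⟨0, by omega⟩ = 0 ∧ θ w ⟨2 * k + 3, by omega⟩ = 0)
    (hθ : ∀ (r : ℝ) (w : Fin (2 * k + 1 + 3) → ℝ),
        w ⟨0, by omega⟩ = 0 → w ⟨2 * k + 3, by omega⟩ = 0 →
        θ w = r • w → w = 0)
    (r : ℝ) (x y : Fin (2 * k + 1 + 3) → ℝ)
    (hx : x ⟨2 * k + 3, by omega⟩ = r) (hy : y ⟨2 * k + 3, by omega⟩ = r) :
    ∃! p : (Fin (2 * k + 1 + 3) → ℝ) × ℝ,
      (p.1 ⟨0, by omega⟩ = 0 ∧ p.1 ⟨2 * k + 3, by omega⟩ = 0) ∧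
        uMap (2 * k + 1) p.1 x + θ p.1 + p.2 • eOne (2 * k + 1) = y := by
  classical
  set i0 : Fin (2 * k + 1 + 3) := ⟨0, by omega⟩ with hi0
  set iN : Fin (2 * k + 1 + 3) := ⟨2 * k + 3, by omega⟩ with hiN
  have hx' : x iN = r := hx
  have hy' : y iN = r := hy
  -- The subspace W
  let W : Submodule ℝ (Fin (2 * k + 1 + 3) → ℝ) :=
    { carrier := {w | w i0 = 0 ∧ w iN = 0}
      add_mem' := fun ha hb => ⟨by simp [ha.1, hb.1], by simp [ha.2, hb.2]⟩
      zero_mem' := ⟨rfl, rfl⟩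
      smul_mem' := fun c a ha => ⟨by simp [ha.1], by simp [ha.2]⟩ }
  let T0 : (Fin (2 * k + 1 + 3) → ℝ) →ₗ[ℝ] (Fin (2 * k + 1 + 3) → ℝ) :=
    θ - r • LinearMap.id
  have hT0 : ∀ v, T0 v = θ v - r • v := fun v => rfl
  have hT0mem : ∀ w ∈ W, T0 w ∈ W := by
    intro w hw
    obtain ⟨h1, h2⟩ := hθW w hw.1 hw.2
    exact ⟨by simp [hT0, h1, hw.1], by simp [hT0, h2, hw.2]⟩
  let T : W →ₗ[ℝ] W := T0.restrict hT0mem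
  have hTval : ∀ m : W, ((T m : W) : Fin (2 * k + 1 + 3) → ℝ) = θ (m : _) - r • (m : _) :=
    fun m => rfl
  have hTinj : Function.Injective T := by
    rw [← LinearMap.ker_eq_bot, LinearMap.ker_eq_bot']
    intro m hm
    have h1 : θ (m : _) - r • (m : _) = 0 := by
      have := congrArg Subtype.val hm
      simpa [hTval] using this
    have h2 : θ (m : _) = r • (m : _) := by
      rwa [sub_eq_zero] at h1
    exact Subtype.ext (hθ r m m.2.1 m.2.2 h2)
  have hTsurj : Function.Surjective T := LinearMap.injective_iff_surjective.mp hTinj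
  -- the right-hand side in W
  let d : Fin (2 * k + 1 + 3) → ℝ := fun j => if j = i0 ∨ j = iN then 0 else y j - x j
  have hdW : d ∈ W := ⟨by simp [d], by simp [d]⟩
  obtain ⟨w, hw⟩ := hTsurj ⟨d, hdW⟩
  set wv : Fin (2 * k + 1 + 3) → ℝ := (w : Fin (2 * k + 1 + 3) → ℝ) with hwv
  have hw0 : wv i0 = 0 := w.2.1
  have hwN : wv iN = 0 := w.2.2
  have hweq : ∀ j, θ wv j - r * wv j = d j := by
    intro j
    have h := congrArg Subtype.val hw
    have h2 := congrFun (hTval w ▸ h) j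
    simpa using h2
  -- coordinate formula for the affine map
  have key : ∀ (w : Fin (2 * k + 1 + 3) → ℝ) (s : ℝ) (j : Fin (2 * k + 1 + 3)),
      (uMap (2 * k + 1) w x + θ w + s • eOne (2 * k + 1)) j
        = x j - r * w j
          + (bform (2 * k + 1) x w - r * bform (2 * k + 1) w w / 2)
              * (if j = i0 then 1 else 0)
          + θ w j + s * (if j = i0 then 1 else 0) := by
    intro w s j
    have hxN : x ⟨2 * k + 1 + 2, by omega⟩ = r := hx'
    simp only [uMap, eOne, Pi.add_apply, Pi.sub_apply, Pi.smul_apply, smul_eq_mul,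
      Pi.single_apply, hxN]
    rfl
  -- the candidate
  set C : ℝ := bform (2 * k + 1) x wv - r * bform (2 * k + 1) wv wv / 2 with hC
  refine ⟨(wv, y i0 - x i0 - C), ⟨⟨hw0, hwN⟩, ?_⟩, ?_⟩
  · funext j
    rw [key]
    dsimp only
    by_cases hj0 : j = i0
    · subst hj0
      have hθ0 := (hθW wv hw0 hwN).1
      rw [if_pos rfl, hw0, hθ0, mul_one, mul_one]
      ring
    · rw [if_neg hj0, mul_zero, mul_zero, add_zero, add_zero]
      by_cases hjN : j = iN
      · subst hjN
        have hθN := (hθW wv hw0 hwN).2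
        rw [hwN, hθN, hx', hy', mul_zero, sub_zero, add_zero]
      · have hd : d j = y j - x j := by simp [d, hj0, hjN]
        have h3 := hweq j
        rw [hd] at h3
        linarith [h3]
  · rintro ⟨w', s'⟩ ⟨⟨h0', hN'⟩, heq⟩
    have h0 : w' i0 = 0 := h0'
    have hN : w' iN = 0 := hN' 
    set C' : ℝ := bform (2 * k + 1) x w' - r * bform (2 * k + 1) w' w' / 2 with hC'
    have hcoord : ∀ j, x j - r * w' j + C' * (if j = i0 then 1 else 0)
        + θ w' j + s' * (if j = i0 then 1 else 0) = y j := by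
      intro j
      have := congrFun heq j
      rwa [key] at this
    have hw'eq : ∀ j, θ w' j - r * w' j = d j := by
      intro j
      by_cases hj0 : j = i0
      · subst hj0
        have : d i0 = 0 := by simp [d]
        rw [this, h0, (hθW w' h0 hN).1, mul_zero, sub_zero]
      · by_cases hjN : j = iN
        · subst hjN
          have : d iN = 0 := by simp [d]
          rw [this, hN, (hθW w' h0 hN).2, mul_zero, sub_zero]
        · have h4 := hcoord j
          rw [if_neg hj0, mul_zero, mul_zero, add_zero, add_zero] at h4
          have : d j = y j - x j := by simp [d, hj0, hjN]
          rw [this]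
          linarith [h4]
    have hwW : w' ∈ W := ⟨h0', hN'⟩
    have hT' : T ⟨w', hwW⟩ = ⟨d, hdW⟩ := by
      apply Subtype.ext
      rw [hTval]
      funext j
      have := hw'eq j
      simp only [Pi.sub_apply, Pi.smul_apply, smul_eq_mul]
      linarith [this]
    have hww : (⟨w', hwW⟩ : W) = w := hTinj (hT'.trans hw.symm)
    have hww' : w' = wv := congrArg Subtype.val hww
    have hs : s' = y i0 - x i0 - C := by
      have h5 := hcoord i0
      rw [if_pos rfl, mul_one, mul_one] at h5
      have hCC : C' = C := by rw [hC', hC, hww']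
      rw [hCC, h0, (hθW w' h0 hN).1] at h5
      linarith [h5]
    exact Prod.ext (by simpa using hww') (by simpa using hs)
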